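/- arXiv:2203.00496 — 4 statements merged into one kernel-verified Lean document; each statement's English description precedes it below -/
import Mathlib

section
/- Let D be an abelian category with three classes of objects C, W, F, where W is thick (closed under two-out-of-three in short exact sequences) and closed under direct summands. Assume (C, W ∩ F) and (^⊥F, F) are complete cotorsion pairs in D and the inclusion ^⊥F ⊆ W holds. Then C ∩ W = ^⊥F; i.e. (C, W, F) is a Hovey triple: (C ∩ W, F) and (C, W ∩ F) are complete cotorsion pairs. -/
open CategoryTheory CategoryTheory.Limits

universe v u

variable {C : Type u} [Category.{v} C] [Abelian C]

/-- `f, g` form a short exact sequence `0 ⟶ X ⟶ Y ⟶ Z ⟶ 0`. -/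
def ShortExactSeq {X Y Z : C} (f : X ⟶ Y) (g : Y ⟶ Z) : Prop :=
  ∃ w : f ≫ g = 0, (ShortComplex.mk f g w).ShortExact

/-- `Ext¹(X, Y) = 0` in the sense of Yoneda: every short exact sequence
`0 ⟶ Y ⟶ E ⟶ X ⟶ 0` splits. -/
def Ext1Vanishes (X Y : C) : Prop :=
  ∀ (S : ShortComplex C), S.ShortExact → (S.X₁ ≅ Y) → (S.X₃ ≅ X) →
    Nonempty S.Splitting

/-- A cotorsion pair `(A, B)`: each class is the `Ext¹`-orthogonal of the other. -/
structure IsCotorsionPair (A B : Set C) : Prop where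
  left_iff : ∀ X : C, X ∈ A ↔ ∀ Y ∈ B, Ext1Vanishes X Y
  right_iff : ∀ Y : C, Y ∈ B ↔ ∀ X ∈ A, Ext1Vanishes X Y

/-- A complete cotorsion pair: every object has both kinds of approximation
sequences. -/
structure IsCompleteCotorsionPair (A B : Set C) : Prop where
  toIsCotorsionPair : IsCotorsionPair A B
  exists_special_precover : ∀ X : C, ∃ (B' A' : C) (f : B' ⟶ A') (g : A' ⟶ X),
    B' ∈ B ∧ A' ∈ A ∧ ShortExactSeq f g
  exists_special_preenvelope : ∀ X : C, ∃ (B' A' : C) (f : X ⟶ B') (g : B' ⟶ A'),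
    B' ∈ B ∧ A' ∈ A ∧ ShortExactSeq f g

/-- A class is thick: in any short exact sequence, if two of the three terms
belong to the class then so does the third. -/
def ThickClass (W : Set C) : Prop :=
  ∀ ⦃X Y Z : C⦄ (f : X ⟶ Y) (g : Y ⟶ Z), ShortExactSeq f g →
    ((X ∈ W → Y ∈ W → Z ∈ W) ∧ (X ∈ W → Z ∈ W → Y ∈ W) ∧ (Y ∈ W → Z ∈ W → X ∈ W))

/-- A class of objects is closed under direct summands (retracts). -/
def SummandClosed (A : Set C) : Prop :=
  ∀ ⦃X Y : C⦄ (i : Y ⟶ X) (r : X ⟶ Y), i ≫ r = 𝟙 Y → X ∈ A → Y ∈ A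

/-- The left `Ext¹`-orthogonal `⟂F` of a class `F`. -/
def LeftPerp (F : Set C) : Set C := {X : C | ∀ F' ∈ F, Ext1Vanishes X F'}


/-- Lifting lemma: given a short exact sequence `S` and a map `g : A ⟶ S.X₃`,
if `Ext¹(A, S.X₁) = 0` then `g` lifts along `S.g`. -/
lemma exists_lift_of_ext1Vanishes {D : Type u} [Category.{v} D] [Abelian D]
    (S : ShortComplex D) (hS : S.ShortExact) (A : D)
    (hext : Ext1Vanishes A S.X₁) (g : A ⟶ S.X₃) :
    ∃ l : A ⟶ S.X₂, l ≫ S.g = g := by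
  have := hS.mono_f
  have := hS.epi_g
  let P := pullback S.g g
  let ι : S.X₁ ⟶ P := pullback.lift S.f 0 (by simp [S.zero])
  have hιf : ι ≫ pullback.fst S.g g = S.f := pullback.lift_fst _ _ _
  have hιs : ι ≫ pullback.snd S.g g = 0 := pullback.lift_snd _ _ _
  let T : ShortComplex D := ShortComplex.mk ι (pullback.snd S.g g) hιs
  have hmono : Mono ι := by
    have : Mono (ι ≫ pullback.fst S.g g) := by rw [hιf]; infer_instance
    exact mono_of_mono ι (pullback.fst S.g g)
  have hT : T.ShortExact := by
    have hexact : T.Exact := by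
      apply ShortComplex.exact_of_f_is_kernel
      refine KernelFork.IsLimit.ofι _ _ (fun {W'} m hm => ?_) (fun {W'} m hm => ?_)
        (fun {W'} m hm u hu => ?_)
      · refine (KernelFork.IsLimit.lift' hS.exact.fIsKernel (m ≫ pullback.fst S.g g) ?_).1
        rw [Category.assoc, pullback.condition, ← Category.assoc, hm, zero_comp]
      · apply pullback.hom_ext
        · rw [Category.assoc, hιf]
          exact (KernelFork.IsLimit.lift' hS.exact.fIsKernel _ _).2
        · rw [Category.assoc, hιs, comp_zero, hm]
      · have hmono' : Mono (ι ≫ pullback.fst S.g g) := by rw [hιf]; infer_instance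
        rw [← cancel_mono (ι ≫ pullback.fst S.g g), hιf]
        have h1 : u ≫ S.f = m ≫ pullback.fst S.g g := by
          rw [← hιf, ← Category.assoc]
          exact congrArg (· ≫ pullback.fst S.g g) hu
        rw [h1]
        exact ((KernelFork.IsLimit.lift' hS.exact.fIsKernel _ _).2).symm
    exact { exact := hexact, mono_f := hmono, epi_g := inferInstance }
  obtain ⟨sp⟩ := hext T hT (Iso.refl _) (Iso.refl _)
  refine ⟨sp.s ≫ pullback.fst S.g g, ?_⟩
  rw [Category.assoc, pullback.condition, ← Category.assoc]
  have : sp.s ≫ T.g = 𝟙 _ := sp.s_g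
  rw [show sp.s ≫ pullback.snd S.g g = 𝟙 A from sp.s_g, Category.id_comp]

/-- Let `D` be an abelian category with classes `𝒞, 𝒲, ℱ`,
where `𝒲` is thick and closed under direct summands.  If `(𝒞, 𝒲 ∩ ℱ)` and
`(⟂ℱ, ℱ)` are complete cotorsion pairs and `⟂ℱ ⊆ 𝒲`, then `𝒞 ∩ 𝒲 = ⟂ℱ`, so
`(𝒞, 𝒲, ℱ)` is a Hovey triple: `(𝒞 ∩ 𝒲, ℱ)` and `(𝒞, 𝒲 ∩ ℱ)` are complete
cotorsion pairs. -/
theorem hovey_triple_of_right_acyclicity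
    {D : Type u} [Category.{v} D] [Abelian D]
    (𝒞 𝒲 ℱ : Set D)
    (hthick : ThickClass 𝒲) (hsummand : SummandClosed 𝒲)
    (h₁ : IsCompleteCotorsionPair 𝒞 (𝒲 ∩ ℱ))
    (h₂ : IsCompleteCotorsionPair (LeftPerp ℱ) ℱ)
    (hacy : LeftPerp ℱ ⊆ 𝒲) :
    𝒞 ∩ 𝒲 = LeftPerp ℱ ∧
    IsCompleteCotorsionPair (𝒞 ∩ 𝒲) ℱ ∧
    IsCompleteCotorsionPair 𝒞 (𝒲 ∩ ℱ) := by
  have key : 𝒞 ∩ 𝒲 = LeftPerp ℱ := by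
    apply Set.eq_of_subset_of_subset
    · rintro X ⟨hXC, hXW⟩ F' hF' S hS e₁ e₃
      -- special precover of X w.r.t. (⟂ℱ, ℱ)
      obtain ⟨B', A', f, g, hB, hA, w, hse⟩ := h₂.exists_special_precover X
      have hAW : A' ∈ 𝒲 := hacy hA
      have hBW : B' ∈ 𝒲 := (hthick f g ⟨w, hse⟩).2.2 hAW hXW
      have hXB : Ext1Vanishes X B' :=
        (h₁.toIsCotorsionPair.left_iff X).mp hXC B' ⟨hBW, hB⟩
      obtain ⟨sp0⟩ := hXB (ShortComplex.mk f g w) hse (Iso.refl _) (Iso.refl _)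
      have hs0 : sp0.s ≫ g = 𝟙 X := sp0.s_g
      -- lift g : A' ⟶ X ≅ S.X₃ along S.g
      have hextA : Ext1Vanishes A' S.X₁ := fun T hT e1 e3 =>
        hA F' hF' T hT (e1 ≪≫ e₁) e3
      obtain ⟨l, hl⟩ := exists_lift_of_ext1Vanishes S hS A' hextA (g ≫ e₃.inv)
      have := hS.mono_f
      refine ⟨ShortComplex.Splitting.ofExactOfSection S hS.exact
        (e₃.hom ≫ sp0.s ≫ l) ?_ inferInstance⟩
      rw [Category.assoc, Category.assoc, hl, ← Category.assoc sp0.s, hs0,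
        Category.id_comp, e₃.hom_inv_id]
    · intro X hX
      refine ⟨?_, hacy hX⟩
      rw [h₁.toIsCotorsionPair.left_iff]
      rintro Y ⟨-, hYF⟩
      exact hX Y hYF
  exact ⟨key, key ▸ h₂, h₁⟩
end

section
/- Dually: let E be an abelian category with three classes of objects C, W, F, where W is thick and closed under direct summands. If (C ∩ W, F) and (C, C^⊥) are complete cotorsion pairs in E and the inclusion C^⊥ ⊆ W holds, then W ∩ F = C^⊥, so (C, W, F) is a Hovey triple. -/
open CategoryTheory CategoryTheory.Limits

universe v u

variable {C : Type u} [Category.{v} C] [Abelian C]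

/-- The right `Ext¹`-orthogonal `C⟂` of a class `𝒞`. -/
def RightPerp (𝒞 : Set C) : Set C := {Y : C | ∀ C' ∈ 𝒞, Ext1Vanishes C' Y}

/-- Auxiliary: the direct sum of a short exact sequence with the trivial sequence
`0 ⟶ A ⟶ A ⟶ 0 ⟶ 0` is short exact. -/
lemma shortExact_biprodMap {E : Type u} [Category.{v} E] [Abelian E]
    {S : ShortComplex E} (hS : S.ShortExact) (A : E) :
    (ShortComplex.mk (biprod.map S.f (𝟙 A)) (biprod.fst ≫ S.g)
      (by rw [← Category.assoc, biprod.map_fst, Category.assoc, S.zero, comp_zero])).ShortExact := by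
  haveI := hS.mono_f
  haveI := hS.epi_g
  have hmono : Mono (biprod.map S.f (𝟙 A)) := by
    constructor
    intro T a b h
    apply biprod.hom_ext
    · rw [← cancel_mono S.f]
      have := congrArg (fun t => t ≫ (biprod.fst : S.X₂ ⊞ A ⟶ S.X₂)) h
      simp only [Category.assoc, biprod.map_fst] at this
      simpa using this
    · have := congrArg (fun t => t ≫ (biprod.snd : S.X₂ ⊞ A ⟶ A)) h
      simp only [Category.assoc, biprod.map_snd, Category.comp_id] at this
      exact this
  haveI := hmono
  refine ⟨?_⟩
  · apply ShortComplex.exact_of_f_is_kernel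
    apply Limits.KernelFork.IsLimit.ofι'
    intro T k hk
    have hk' : (k ≫ biprod.fst) ≫ S.g = 0 := by
      simpa only [Category.assoc] using hk
    refine ⟨biprod.lift (hS.exact.lift (k ≫ biprod.fst) hk') (k ≫ biprod.snd), ?_⟩
    apply biprod.hom_ext
    · simp [hS.exact.lift_f]
    · simp

/-- (Dual of Statement 4.)  Let `E` be an abelian category with
classes `𝒞, 𝒲, ℱ`, where `𝒲` is thick and closed under direct summands.  If
`(𝒞 ∩ 𝒲, ℱ)` and `(𝒞, 𝒞⟂)` are complete cotorsion pairs and `𝒞⟂ ⊆ 𝒲`, then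
`𝒲 ∩ ℱ = 𝒞⟂`, so `(𝒞, 𝒲, ℱ)` is a Hovey triple. -/
theorem hovey_triple_of_left_acyclicity
    {E : Type u} [Category.{v} E] [Abelian E]
    (𝒞 𝒲 ℱ : Set E)
    (hthick : ThickClass 𝒲) (hsummand : SummandClosed 𝒲)
    (h₁ : IsCompleteCotorsionPair (𝒞 ∩ 𝒲) ℱ)
    (h₂ : IsCompleteCotorsionPair 𝒞 (RightPerp 𝒞))
    (hacy : RightPerp 𝒞 ⊆ 𝒲) :
    𝒲 ∩ ℱ = RightPerp 𝒞 ∧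
    IsCompleteCotorsionPair (𝒞 ∩ 𝒲) ℱ ∧
    IsCompleteCotorsionPair 𝒞 (𝒲 ∩ ℱ) := by
  have key : 𝒲 ∩ ℱ = RightPerp 𝒞 := by
    apply Set.Subset.antisymm
    · -- `𝒲 ∩ ℱ ⊆ RightPerp 𝒞`
      rintro Y ⟨hYW, hYF⟩ X hX S hS e₁ e₃
      -- special preenvelope of `Y` w.r.t. `(𝒞, 𝒞⟂)`
      obtain ⟨B', A', f₀, g₀, hB', hA', w₀, hse₀⟩ := h₂.exists_special_preenvelope Y
      -- `A' ∈ 𝒲` by thickness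
      have hA'W : A' ∈ 𝒲 := (hthick f₀ g₀ ⟨w₀, hse₀⟩).1 hYW (hacy hB')
      -- the preenvelope sequence splits since `Y ∈ ℱ` and `A' ∈ 𝒞 ∩ 𝒲`
      have hv : Ext1Vanishes A' Y :=
        ((h₁.toIsCotorsionPair.right_iff Y).1 hYF) A' ⟨hA', hA'W⟩
      obtain ⟨sp₀⟩ := hv (ShortComplex.mk f₀ g₀ w₀) hse₀ (Iso.refl _) (Iso.refl _)
      -- form the direct sum of `S` with the trivial sequence on `A'`
      have hS'' := shortExact_biprodMap hS A'
      -- it splits since its kernel is isomorphic to `B' ∈ 𝒞⟂` and `X ∈ 𝒞`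
      have e : (S.X₁ ⊞ A') ≅ B' :=
        (biprod.mapIso e₁ (Iso.refl A')) ≪≫ sp₀.isoBinaryBiproduct.symm
      obtain ⟨σ⟩ := hB' X hX _ hS'' e e₃
      -- extract a retraction of `S.f`
      haveI := hS.mono_f
      haveI := hS.epi_g
      refine ⟨ShortComplex.Splitting.ofExactOfRetraction S hS.exact
        (biprod.inl ≫ σ.r ≫ biprod.fst) ?_ hS.epi_g⟩
      have h1 : S.f ≫ (biprod.inl : S.X₂ ⟶ S.X₂ ⊞ A') =
          (biprod.inl : S.X₁ ⟶ S.X₁ ⊞ A') ≫ biprod.map S.f (𝟙 A') := by simp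
      have h2 := σ.f_r
      calc S.f ≫ biprod.inl ≫ σ.r ≫ biprod.fst
          = (biprod.inl ≫ biprod.map S.f (𝟙 A') ≫ σ.r) ≫ biprod.fst := by
            simp only [← Category.assoc]; rw [← h1]
        _ = 𝟙 S.X₁ := by
            rw [h2]; simp
    · -- `RightPerp 𝒞 ⊆ 𝒲 ∩ ℱ`
      intro Y hY
      refine ⟨hacy hY, ?_⟩
      exact (h₁.toIsCotorsionPair.right_iff Y).2 (fun X hX => hY X hX.1)
  exact ⟨key, h₁, key ▸ h₂⟩
end

section
/- Let R be a ring, let G be a Gorenstein projective left R-module, and let S be a right R-module of finite flat dimension. Then Tor_1^R(S, G) = 0. More generally Tor_i^R(S, G) = 0 for all i ≥ 1. -/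
open CategoryTheory CategoryTheory.Limits

universe u

/-- `X` has injective dimension at most `n` in an abelian category. -/
def InjDimLE {C : Type*} [Category C] [Abelian C] : ℕ → C → Prop
  | 0, X => Injective X
  | n + 1, X => ∃ (I : C) (f : X ⟶ I), Injective I ∧ Mono f ∧ InjDimLE n (cokernel f)

/-- `S` has flat dimension at most `n`. -/
def FlatDimLE (R : Type u) [CommRing R] : ℕ → ModuleCat.{u} R → Prop
  | 0, X => Module.Flat R X
  | n + 1, X => ∃ (P : ModuleCat.{u} R) (f : P ⟶ X),
      Module.Flat R P ∧ Epi f ∧ FlatDimLE R n (kernel f)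

/-- A complex of projectives is totally acyclic if it is acyclic and stays
acyclic after applying `Hom(−, Q)` for every projective `Q`. -/
def IsTotallyAcyclicComplexOfProjectives {R : Type u} [CommRing R]
    (P : HomologicalComplex (ModuleCat.{u} R) (ComplexShape.up ℤ)) : Prop :=
  (∀ n : ℤ, Projective (P.X n)) ∧
  (∀ n : ℤ, P.ExactAt n) ∧
  (∀ (Q : ModuleCat.{u} R), Projective Q → ∀ n : ℤ,
    Function.Exact (fun g : P.X (n + 1) ⟶ Q => P.d n (n + 1) ≫ g)
      (fun g : P.X n ⟶ Q => P.d (n - 1) n ≫ g))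

/-- `G` is Gorenstein projective: a cycle module of a totally acyclic complex
of projectives. -/
def IsGorensteinProjective {R : Type u} [CommRing R] (G : ModuleCat.{u} R) : Prop :=
  ∃ P : HomologicalComplex (ModuleCat.{u} R) (ComplexShape.up ℤ),
    IsTotallyAcyclicComplexOfProjectives P ∧ Nonempty (G ≅ P.cycles 0)

/-! Write `G ≅ Z⁰(P)` for a totally acyclic complex `P` of projectives. The truncation
`P^{≤ -1}` is a projective resolution of `G`, so `Tor_{i+1}(S, G)` is a homology module of
`S ⊗ P` in a negative degree. Tensoring with `S` keeps an acyclic complex of flat modules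
acyclic: for `S` flat because `S ⊗ -` is exact, and in general by induction on the flat
dimension, since for `0 → K → F → S → 0` with `F` flat the sequence
`0 → K ⊗ P → F ⊗ P → S ⊗ P → 0` of complexes is still short exact (each `Pⁿ` is flat), and its
long exact homology sequence passes acyclicity from `K ⊗ P` and `F ⊗ P` on to `S ⊗ P`. -/

universe v

open MonoidalCategory

lemma CategoryTheory.ShortComplex.ShortExact.acyclic_X₃_of_acyclic {C ι : Type*} [Category C]
    [Abelian C] {c : ComplexShape ι} {S : ShortComplex (HomologicalComplex C c)}
    (hS : S.ShortExact) (h₁ : S.X₁.Acyclic) (h₂ : S.X₂.Acyclic) : S.X₃.Acyclic :=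
  fun i ↦ hS.exactAt_X₃ i ((h₂ i).isZero_homology.epi _) fun j _ ↦ (h₁ j).isZero_homology.mono _

lemma ChainComplex.quasiIsoAt_toSingle₀Equiv_symm_zero_iff {C : Type*} [Category C] [Abelian C]
    (K : ChainComplex C ℕ) {X : C} (φ : K.X 0 ⟶ X) (hφ : K.d 1 0 ≫ φ = 0) :
    QuasiIsoAt ((toSingle₀Equiv K X).symm ⟨φ, hφ⟩) 0 ↔ (ShortComplex.mk _ _ hφ).Exact ∧ Epi φ := by
  rw [ChainComplex.quasiIsoAt₀_iff, ShortComplex.quasiIso_iff_of_zeros']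
  · exact ShortComplex.exact_and_epi_g_iff_of_iso
      (ShortComplex.isoMk (Iso.refl _) (Iso.refl _) (Iso.refl _)
        ((Category.id_comp _).trans (Category.comp_id _).symm)
        ((Category.id_comp _).trans
          ((toSingle₀Equiv_symm_apply_f_zero φ hφ).symm.trans (Category.comp_id _).symm)))
  · exact K.shape _ _ (by simp)
  all_goals rfl

namespace HomologicalComplex

section

variable {C ι : Type*} [Category C] {c : ComplexShape ι}

lemma Acyclic.map {D : Type*} [Category D] [Abelian C] [Abelian D] {K : HomologicalComplex C c}
    (hK : K.Acyclic) (F : C ⥤ D) [F.PreservesZeroMorphisms] [F.PreservesHomology] :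
    ((F.mapHomologicalComplex c).obj K).Acyclic :=
  fun i ↦ (exactAt_iff _ _).2 (((exactAt_iff _ _).1 (hK i)).map F)

lemma exactAt_restriction_iff {ι' : Type*} {c' : ComplexShape ι'} [HasZeroMorphisms C]
    (K : HomologicalComplex C c') (e : c.Embedding c') [e.IsRelIff] {i j k : ι}
    (hi : c.prev j = i) (hk : c.next j = k)
    (hi' : c'.prev (e.f j) = e.f i) (hk' : c'.next (e.f j) = e.f k) :
    (K.restriction e).ExactAt j ↔ K.ExactAt (e.f j) := by
  rw [exactAt_iff' _ i j k hi hk, exactAt_iff' _ (e.f i) (e.f j) (e.f k) hi' hk']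
  exact ShortComplex.exact_iff_of_iso (restriction.sc'Iso K e i j k rfl rfl rfl hi' hk')

variable [Abelian C] {K : HomologicalComplex C c}

lemma ExactAt.epi_toCycles {i j : ι} (hK : K.ExactAt j) (hij : c.prev j = i) :
    Epi (K.toCycles i j) := by
  subst hij
  exact ((K.exactAt_iff j).1 hK).epi_toCycles

lemma ExactAt.exact_toCycles {h i j : ι} (hK : K.ExactAt i) (hhi : c.prev i = h)
    (hij : c.next i = j) :
    (ShortComplex.mk (K.d h i) (K.toCycles i j) (K.d_toCycles h i j)).Exact := by
  rw [exactAt_iff' K h i j hhi hij] at hK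
  let φ : ShortComplex.mk _ _ (K.d_toCycles h i j) ⟶ K.sc' h i j :=
    { τ₁ := 𝟙 _, τ₂ := 𝟙 _, τ₃ := K.iCycles j
      comm₁₂ := (Category.id_comp _).trans (Category.comp_id _).symm
      comm₂₃ := (Category.id_comp _).trans (K.toCycles_i i j).symm }
  have : Epi φ.τ₁ := inferInstanceAs (Epi (𝟙 _))
  have : IsIso φ.τ₂ := inferInstanceAs (IsIso (𝟙 _))
  have : Mono φ.τ₃ := inferInstanceAs (Mono (K.iCycles j))
  exact (ShortComplex.exact_iff_of_epi_of_isIso_of_mono φ).2 hK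

end

variable {C : Type*} [Category.{v} C] [Abelian C] (P : CochainComplex C ℤ)

lemma exactAt_restriction_embeddingUpIntLE_succ_iff (p : ℤ) (n : ℕ) :
    (P.restriction (ComplexShape.embeddingUpIntLE p)).ExactAt (n + 1) ↔
      P.ExactAt (p - (n + 1)) := by
  rw [exactAt_restriction_iff P _ (i := n + 2) (k := n) (by simp) (by simp)] <;> simp <;> omega

/-- The truncation `P^{≤ -1}`, reindexed so that `P^{-1-n}` sits in degree `n`, resolves `Z⁰(P)`
through `P^{-1} ⟶ Z⁰(P)`. -/
noncomputable def projectiveResolutionCyclesZero (hP : ∀ n < 0, Projective (P.X n))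
    (hexact : ∀ n ≤ 0, P.ExactAt n) : ProjectiveResolution (P.cycles 0) where
  complex := P.restriction (ComplexShape.embeddingUpIntLE (-1))
  projective n := hP _ (by simp; omega)
  π := (ChainComplex.toSingle₀Equiv _ _).symm ⟨P.toCycles _ 0, P.d_toCycles _ _ _⟩
  quasiIso := ⟨fun n => by
    cases n with
    | zero =>
      exact (ChainComplex.quasiIsoAt_toSingle₀Equiv_symm_zero_iff _ _ _).2
        ⟨(hexact _ (by simp)).exact_toCycles (by simp) (by simp),
          (hexact 0 le_rfl).epi_toCycles (by simp)⟩
    | succ n =>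
      rw [quasiIsoAt_iff_exactAt']
      · exact (exactAt_restriction_embeddingUpIntLE_succ_iff P _ n).2 (hexact _ (by omega))
      · apply ChainComplex.exactAt_succ_single_obj⟩

end HomologicalComplex

section Tensor

variable {R : Type u} [CommRing R] {ι : Type*} {c : ComplexShape ι}

/-- The short complex of complexes `T.X₁ ⊗ X ⟶ T.X₂ ⊗ X ⟶ T.X₃ ⊗ X`. -/
noncomputable def CategoryTheory.ShortComplex.tensorComplex (T : ShortComplex (ModuleCat.{u} R))
    (X : HomologicalComplex (ModuleCat.{u} R) c) :
    ShortComplex (HomologicalComplex (ModuleCat.{u} R) c) :=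
  ShortComplex.mk ((NatTrans.mapHomologicalComplex ((tensoringLeft _).map T.f) c).app X)
    ((NatTrans.mapHomologicalComplex ((tensoringLeft _).map T.g) c).app X) (by
      ext i : 1
      change T.f ▷ X.X i ≫ T.g ▷ X.X i = 0
      rw [← comp_whiskerRight, T.zero, MonoidalPreadditive.zero_whiskerRight])

lemma CategoryTheory.ShortComplex.ShortExact.tensorComplex {T : ShortComplex (ModuleCat.{u} R)}
    (hT : T.ShortExact) (X : HomologicalComplex (ModuleCat.{u} R) c)
    (hX : ∀ i, Module.Flat R (X.X i)) : (T.tensorComplex X).ShortExact := by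
  refine HomologicalComplex.shortExact_of_degreewise_shortExact _ fun i ↦ ?_
  have := hX i
  exact hT.map_of_exact (tensorRight (X.X i))

theorem acyclic_tensorLeft_of_flatDimLE (X : HomologicalComplex (ModuleCat.{u} R) c)
    (hX : ∀ i, Module.Flat R (X.X i)) (hacyc : X.Acyclic) :
    ∀ (n : ℕ) (S : ModuleCat.{u} R), FlatDimLE R n S →
      (((tensorLeft S).mapHomologicalComplex c).obj X).Acyclic
  | 0, S, hS => by
    have : Module.Flat R S := hS
    exact hacyc.map (tensorLeft S)
  | n + 1, S, ⟨F, p, hF, hp, hK⟩ => by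
    have : Module.Flat R F := hF
    have hT : (ShortComplex.mk (kernel.ι p) p (kernel.condition p)).ShortExact :=
      { exact := ShortComplex.exact_of_f_is_kernel _ (kernelIsKernel p) }
    exact (hT.tensorComplex X hX).acyclic_X₃_of_acyclic
      (acyclic_tensorLeft_of_flatDimLE X hX hacyc n _ hK) (hacyc.map (tensorLeft F))

end Tensor

theorem tor_isZero_of_gorensteinProjective_of_finite_flatDim_general
    (R : Type u) [CommRing R]
    (S G : ModuleCat.{u} R)
    (hG : IsGorensteinProjective G) (hS : ∃ n, FlatDimLE R n S) :
    ∀ i : ℕ, 1 ≤ i → IsZero (((Tor (ModuleCat.{u} R) i).obj S).obj G) := by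
  obtain ⟨P, ⟨hproj, hexact, -⟩, ⟨e⟩⟩ := hG
  obtain ⟨n, hS⟩ := hS
  have hflat (k : ℤ) : Module.Flat R (P.X k) := by
    have := hproj k
    infer_instance
  have hacyc := acyclic_tensorLeft_of_flatDimLE P hflat hexact n S hS
  let Q := P.projectiveResolutionCyclesZero (fun k _ ↦ hproj k) (fun k _ ↦ hexact k)
  rintro (_ | j) hj
  · omega
  · exact IsZero.of_iso
      ((HomologicalComplex.exactAt_restriction_embeddingUpIntLE_succ_iff _ (-1) j).2
        (hacyc _)).isZero_homology
      (((Tor _ (j + 1)).obj S).mapIso e ≪≫ Q.isoLeftDerivedObj (tensorLeft S) (j + 1))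

/-- Let `R` be an (Iwanaga–Gorenstein, commutative) ring, `G`
a Gorenstein projective `R`-module and `S` an `R`-module of finite flat
dimension.  Then `Tor_i^R(S, G) = 0` for all `i ≥ 1`. -/
theorem tor_isZero_of_gorensteinProjective_of_finite_flatDim
    (R : Type u) [CommRing R] [IsNoetherianRing R]
    (hGor : ∃ n, InjDimLE n (ModuleCat.of R R))
    (S G : ModuleCat.{u} R)
    (hG : IsGorensteinProjective G) (hS : ∃ n, FlatDimLE R n S) :
    ∀ i : ℕ, 1 ≤ i → IsZero (((Tor (ModuleCat.{u} R) i).obj S).obj G) :=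
  tor_isZero_of_gorensteinProjective_of_finite_flatDim_general R S G hG hS
end

section
/- Let φ : R → S be a ring homomorphism such that S has finite flat dimension as a right R-module. Then the restriction of scalars of every injective left S-module has finite injective dimension as a left R-module. -/
open CategoryTheory CategoryTheory.Limits

universe u

/-!
Dualising a flat resolution of `S` into `ℚ/ℤ` gives an injective coresolution of the character
module `S⋆ = Hom_ℤ(S, ℚ/ℤ)` of the same length, so `S⋆`, and with it every power of `S⋆`, has
finite injective dimension over `R`. An injective `S`-module `I` embeds `S`-linearly into the
power `(S⋆)^(I⋆)` via `x ↦ (c ↦ (s ↦ c (s • x)))`; by injectivity this embedding splits, so `I`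
is an `R`-linear retract of a module of finite injective dimension. Dimensions are handled through
the `Ext`-based `HasInjectiveDimensionLE`, which is stable under retracts and dimension shifting.
-/

theorem injDimLE_of_hasInjectiveDimensionLE {C : Type*} [Category C] [Abelian C]
    [EnoughInjectives C] : ∀ (n : ℕ) (X : C), HasInjectiveDimensionLE X n → InjDimLE n X
  | 0, _, hX => injective_iff_hasInjectiveDimensionLT_one.mpr hX
  | n + 1, X, hX => by
    have hS : (ShortComplex.mk (Injective.ι X) (cokernel.π _) (cokernel.condition _)).ShortExact :=
      { exact := ShortComplex.exact_cokernel _ }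
    exact ⟨Injective.under X, Injective.ι X, inferInstance, inferInstance,
      injDimLE_of_hasInjectiveDimensionLE n _
        (hS.hasInjectiveDimensionLT_X₃ (n + 1) inferInstance hX)⟩

namespace CharacterModule

variable {R : Type*} [CommRing R]

section Dual

variable {A B C : Type*} [AddCommGroup A] [AddCommGroup B] [AddCommGroup C]
  [Module R A] [Module R B] [Module R C]

theorem dual_exact {f : A →ₗ[R] B} {g : B →ₗ[R] C} (hfg : Function.Exact f g)
    (hg : Function.Surjective g) : Function.Exact (dual g) (dual f) := by
  intro c
  constructor
  · intro hc
    have hker : g.toAddMonoidHom.ker ≤ c.ker := by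
      intro b hb
      obtain ⟨a, rfl⟩ := (hfg b).mp hb
      exact DFunLike.congr_fun hc a
    refine ⟨AddMonoidHom.liftOfRightInverse g.toAddMonoidHom _
      (Function.rightInverse_surjInv hg) ⟨c, hker⟩, ?_⟩
    ext b
    exact AddMonoidHom.liftOfRightInverse_comp_apply _ _ (Function.rightInverse_surjInv hg) _ b
  · rintro ⟨d, rfl⟩
    ext a
    show d (g (f a)) = 0
    rw [hfg.apply_apply_eq_zero, map_zero]

end Dual

instance {S A : Type*} [CommRing S] [Algebra R S] [AddCommGroup A] [Module R A] [Module S A]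
    [IsScalarTower R S A] : IsScalarTower R S (CharacterModule A) where
  smul_assoc r s c := by
    ext a
    simp [smul_comm s r a]

variable (M : Type*) [AddCommGroup M] [Module R M]

noncomputable def toPi : M →ₗ[R] (CharacterModule M → CharacterModule R) :=
  LinearMap.pi fun c ↦ curry (dual (TensorProduct.rid R M).toLinearMap c)

theorem toPi_apply_apply (x : M) (c : CharacterModule M) (r : R) :
    toPi M x c r = c (r • x) := rfl

theorem toPi_injective : Function.Injective (toPi (R := R) M) := by
  rw [injective_iff_map_eq_zero]
  intro x hx
  refine eq_zero_of_character_apply fun c ↦ ?_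
  have hc := DFunLike.congr_fun (congrFun hx c) (1 : R)
  rwa [toPi_apply_apply, one_smul] at hc

end CharacterModule

namespace CategoryTheory.ShortComplex

noncomputable def characterModuleDual {R : Type*} [CommRing R] (S : ShortComplex (ModuleCat.{v} R)) :
    ShortComplex (ModuleCat.{v} R) :=
  moduleCatMk (CharacterModule.dual S.g.hom) (CharacterModule.dual S.f.hom) <| by
    rw [← CharacterModule.dual_comp, ← ModuleCat.hom_comp, S.zero, ModuleCat.hom_zero,
      CharacterModule.dual_zero]

theorem ShortExact.characterModuleDual {R : Type*} [CommRing R]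
    {S : ShortComplex (ModuleCat.{v} R)} (hS : S.ShortExact) : S.characterModuleDual.ShortExact where
  exact := (moduleCat_exact_iff_function_exact _).mpr <|
    CharacterModule.dual_exact ((moduleCat_exact_iff_function_exact _).mp hS.exact)
      hS.moduleCat_surjective_g
  mono_f := (ModuleCat.mono_iff_injective _).mpr <|
    CharacterModule.dual_injective_of_surjective _ hS.moduleCat_surjective_g
  epi_g := (ModuleCat.epi_iff_surjective _).mpr <|
    CharacterModule.dual_surjective_of_injective _ hS.moduleCat_injective_f

def moduleCatPi {R : Type*} [Ring R] (ι : Type v) (S : ShortComplex (ModuleCat.{v} R)) :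
    ShortComplex (ModuleCat.{v} R) :=
  moduleCatMk (S.f.hom.compLeft ι) (S.g.hom.compLeft ι) <| by
    ext x i
    exact S.zero_apply (x i)

theorem ShortExact.moduleCatPi {R : Type*} [Ring R] (ι : Type v)
    {S : ShortComplex (ModuleCat.{v} R)} (hS : S.ShortExact) : (S.moduleCatPi ι).ShortExact where
  exact := by
    rw [moduleCat_exact_iff]
    intro x hx
    choose y hy using fun i ↦ (moduleCat_exact_iff S).mp hS.exact (x i) (congrFun hx i)
    exact ⟨y, funext hy⟩
  mono_f := (ModuleCat.mono_iff_injective _).mpr fun x y hxy ↦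
    funext fun i ↦ hS.moduleCat_injective_f (congrFun hxy i)
  epi_g := (ModuleCat.epi_iff_surjective _).mpr fun z ↦
    ⟨fun i ↦ (hS.moduleCat_surjective_g (z i)).choose,
      funext fun i ↦ (hS.moduleCat_surjective_g (z i)).choose_spec⟩

end CategoryTheory.ShortComplex

theorem hasInjectiveDimensionLE_characterModule_of_flatDimLE {R : Type u} [CommRing R] :
    ∀ (n : ℕ) (X : ModuleCat.{u} R), FlatDimLE R n X →
      HasInjectiveDimensionLE (ModuleCat.of R (CharacterModule X)) n
  | 0, X, hX => by
    have := Module.Flat.iff_characterModule_injective.mp hX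
    exact injective_iff_hasInjectiveDimensionLT_one.mp
      (Module.injective_object_of_injective_module R (CharacterModule X))
  | n + 1, X, ⟨P, f, hP, hf, hK⟩ => by
    have hS : (ShortComplex.mk (kernel.ι f) f (kernel.condition f)).ShortExact :=
      { exact := ShortComplex.exact_kernel f }
    have := Module.Flat.iff_characterModule_injective.mp hP
    have : Injective (ModuleCat.of R (CharacterModule P)) :=
      Module.injective_object_of_injective_module R (CharacterModule P)
    exact hS.characterModuleDual.hasInjectiveDimensionLT_X₁ (n + 1)
      (hasInjectiveDimensionLE_characterModule_of_flatDimLE n _ hK)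
      (inferInstanceAs (HasInjectiveDimensionLT (ModuleCat.of R (CharacterModule P)) (n + 2)))

theorem hasInjectiveDimensionLE_pi {R : Type u} [Ring R] [Small.{v} R] (ι : Type v) :
    ∀ (n : ℕ) (M : ModuleCat.{v} R) [HasInjectiveDimensionLE M n],
      HasInjectiveDimensionLE (ModuleCat.of R (ι → M)) n
  | 0, M, hM => by
    have : Module.Injective R M := Module.injective_module_of_injective_object
      (inj := injective_iff_hasInjectiveDimensionLT_one.mpr hM) R M
    exact injective_iff_hasInjectiveDimensionLT_one.mp
      (Module.injective_object_of_injective_module R (ι → M))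
  | n + 1, M, hM => by
    let S : ShortComplex (ModuleCat.{v} R) :=
      ShortComplex.mk (Injective.ι M) (cokernel.π _) (cokernel.condition _)
    have hS : S.ShortExact := { exact := ShortComplex.exact_cokernel _ }
    have := hS.hasInjectiveDimensionLT_X₃ (n + 1) inferInstance hM
    have : Module.Injective R S.X₂ :=
      Module.injective_module_of_injective_object (inj := inferInstanceAs (Injective S.X₂)) R _
    have : Injective (S.moduleCatPi ι).X₂ := Module.injective_object_of_injective_module R _
    exact (hS.moduleCatPi ι).hasInjectiveDimensionLT_X₁ (n + 1)
      (hasInjectiveDimensionLE_pi ι n S.X₃) inferInstance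

section ScalarTower

variable {R S : Type u} [CommRing R] [CommRing S] [Algebra R S]
  (M : Type u) [AddCommGroup M] [Module R M] [Module S M] [IsScalarTower R S M]

noncomputable def retractPiCharacterModuleOfInjective [Module.Injective S M] :
    Retract (ModuleCat.of R M) (ModuleCat.of R (CharacterModule M → CharacterModule S)) :=
  have hr := Module.Injective.extension_property S M _ _ _ (CharacterModule.toPi_injective M)
    LinearMap.id
  { i := ModuleCat.ofHom ((CharacterModule.toPi M).restrictScalars R)
    r := ModuleCat.ofHom (hr.choose.restrictScalars R)
    retract := by
      ext x
      exact LinearMap.congr_fun hr.choose_spec x }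

theorem hasInjectiveDimensionLE_of_injective_of_flatDimLE {n : ℕ}
    (hS : FlatDimLE R n (ModuleCat.of R S)) [Module.Injective S M] :
    HasInjectiveDimensionLE (ModuleCat.of R M) n :=
  have := hasInjectiveDimensionLE_characterModule_of_flatDimLE n _ hS
  have := hasInjectiveDimensionLE_pi (CharacterModule M) n (ModuleCat.of R (CharacterModule S))
  (retractPiCharacterModuleOfInjective (R := R) (S := S) M).hasInjectiveDimensionLT (n + 1)

end ScalarTower

/-- Let `R → S` be a ring homomorphism (here: an `R`-algebra
structure on `S`) such that `S` has finite flat dimension as an `R`-module.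
Then the restriction of scalars of every injective `S`-module has finite
injective dimension as an `R`-module. -/
theorem restrictScalars_injective_finite_injDim
    (R S : Type u) [CommRing R] [CommRing S] [Algebra R S]
    (hS : ∃ n, FlatDimLE R n (ModuleCat.of R S))
    (I : Type u) [AddCommGroup I] [Module S I] (hI : Module.Injective S I) :
    ∃ n, InjDimLE n (@ModuleCat.of R _ (RestrictScalars R S I) _ (RestrictScalars.module R S I)) := by
  obtain ⟨n, hS⟩ := hS
  let := Module.restrictScalars R S I
  have := IsScalarTower.restrictScalars R S I
  exact ⟨n, injDimLE_of_hasInjectiveDimensionLE n _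
    (hasInjectiveDimensionLE_of_injective_of_flatDimLE I hS)⟩
end
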